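/- arXiv:2602.16205 — 3 statements merged into one kernel-verified Lean document; each statement's English description precedes it below -/
import Mathlib

section
/- Let φ be twice differentiable and strictly convex on (0,∞) with φ′ > 0 there, and let A > 0. For w > v₁ > v₂ > 0 with φ(w) < A, the quantity D(v₁,v₂,w) = φ′(v₂)·{φ′(w)·[A − L_{v₁}(w)] − φ′(v₁)·[A − φ(w)]} + φ′(v₁)·{φ′(w)·L_{v₂}(w) − φ′(v₂)·φ(w)} is strictly positive, provided L_{v₂} > 0 on (v₂,∞) and φ(v) > 0 for v > 0. -/
/-!
Write `a < b < c` for `φ'(v₂) < φ'(v₁) < φ'(w)` (convexity). Then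
`D = a (c - b) (A - φ w) + a c (φ w - L_{v₁} w) + b (c L_{v₂} w - a φ w)`.
The first summand is positive since `φ w < A`, the second since `φ` lies strictly above its
tangent lines, and the third because `u ↦ φ'(u) L_{v₂}(u) - φ'(v₂) φ(u)` vanishes at `v₂` and has
derivative `φ''(u) L_{v₂}(u) > 0` on `(v₂, ∞)`.
-/

open Set

lemma lt_of_hasDerivAt_pos {f f' : ℝ → ℝ} {a b : ℝ} (hab : a < b)
    (hf : ∀ x ∈ Icc a b, HasDerivAt f (f' x) x) (hf' : ∀ x ∈ Ioo a b, 0 < f' x) :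
    f a < f b := by
  have hmono : StrictMonoOn f (Icc a b) := by
    refine strictMonoOn_of_hasDerivWithinAt_pos (f' := f') (convex_Icc a b)
      (fun x hx => (hf x hx).continuousAt.continuousWithinAt) (fun x hx => ?_) ?_
    · exact (hf x (interior_subset hx)).hasDerivWithinAt
    · simpa only [interior_Icc] using hf'
  exact hmono (left_mem_Icc.2 hab.le) (right_mem_Icc.2 hab.le) hab

lemma add_mul_sub_lt_of_hasDerivAt {φ φ' : ℝ → ℝ} {v w : ℝ} (hvw : v < w)
    (hd : ∀ x ∈ Icc v w, HasDerivAt φ (φ' x) x) (hmono : ∀ x ∈ Ioo v w, φ' v < φ' x) :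
    φ v + φ' v * (w - v) < φ w := by
  have key := lt_of_hasDerivAt_pos (f := fun u => φ u - φ' v * (u - v))
    (f' := fun u => φ' u - φ' v) hvw
    (fun x hx => ((hd x hx).sub (((hasDerivAt_id' x).sub_const v).const_mul (φ' v))).congr_deriv
      (by ring))
    (fun x hx => sub_pos.2 (hmono x hx))
  simp only [sub_self, mul_zero, sub_zero] at key
  linarith

lemma mul_lt_mul_tangent_of_hasDerivAt {φ φ' φ'' : ℝ → ℝ} {v w : ℝ} (hvw : v < w)
    (hd : ∀ x ∈ Icc v w, HasDerivAt φ (φ' x) x) (hd' : ∀ x ∈ Icc v w, HasDerivAt φ' (φ'' x) x)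
    (hφ'' : ∀ x ∈ Ioo v w, 0 < φ'' x) (hL : ∀ x ∈ Ioo v w, 0 < φ v + φ' v * (x - v)) :
    φ' v * φ w < φ' w * (φ v + φ' v * (w - v)) := by
  have key := lt_of_hasDerivAt_pos
    (f := fun u => φ' u * (φ v + φ' v * (u - v)) - φ' v * φ u)
    (f' := fun u => φ'' u * (φ v + φ' v * (u - v))) hvw
    (fun x hx => by
      have := ((hd' x hx).mul
        ((((hasDerivAt_id x).sub_const v).const_mul (φ' v)).const_add (φ v))).sub
        ((hd x hx).const_mul (φ' v))
      exact this.congr_deriv (by simp only [id]; ring))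
    (fun x hx => mul_pos (hφ'' x hx) (hL x hx))
  simp only [sub_self, mul_zero, add_zero] at key
  linarith

theorem stmt4_general (φ φ' φ'' : ℝ → ℝ)
    (hd : ∀ v > 0, HasDerivAt φ (φ' v) v)
    (hd' : ∀ v > 0, HasDerivAt φ' (φ'' v) v)
    (hφ' : ∀ v > 0, 0 < φ' v) (hφ'' : ∀ v > 0, 0 < φ'' v)
    (A : ℝ)
    (L : ℝ → ℝ → ℝ) (hL : ∀ V v, L V v = φ V + φ' V * (v - V))
    (v₁ v₂ w : ℝ) (h2 : 0 < v₂) (h12 : v₂ < v₁) (h1w : v₁ < w) (hwA : φ w < A)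
    (hLpos : ∀ u > v₂, 0 < L v₂ u) :
    0 < φ' v₂ * (φ' w * (A - L v₁ w) - φ' v₁ * (A - φ w))
        + φ' v₁ * (φ' w * L v₂ w - φ' v₂ * φ w) := by
  have hd_on : ∀ {a b}, 0 < a → ∀ x ∈ Icc a b, HasDerivAt φ (φ' x) x :=
    fun ha x hx => hd x (ha.trans_le hx.1)
  have hd'_on : ∀ {a b}, 0 < a → ∀ x ∈ Icc a b, HasDerivAt φ' (φ'' x) x :=
    fun ha x hx => hd' x (ha.trans_le hx.1)
  have hφ''_on : ∀ {a b}, 0 < a → ∀ x ∈ Ioo a b, 0 < φ'' x :=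
    fun ha x hx => hφ'' x (ha.trans hx.1)
  have h1 : 0 < v₁ := h2.trans h12
  have hmono : ∀ {x y}, 0 < x → x < y → φ' x < φ' y :=
    fun hx hxy => lt_of_hasDerivAt_pos hxy (hd'_on hx) (hφ''_on hx)
  have ha : 0 < φ' v₂ := hφ' v₂ h2
  have hab : φ' v₂ < φ' v₁ := hmono h2 h12
  have hbc : φ' v₁ < φ' w := hmono h1 h1w
  have htangent : L v₁ w < φ w := hL v₁ w ▸
    add_mul_sub_lt_of_hasDerivAt h1w (hd_on h1) fun x hx => hmono h1 hx.1
  have hcross : φ' v₂ * φ w < φ' w * L v₂ w := hL v₂ w ▸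
    mul_lt_mul_tangent_of_hasDerivAt (h12.trans h1w) (hd_on h2) (hd'_on h2) (hφ''_on h2)
      fun x hx => hL v₂ x ▸ hLpos x hx.1
  calc 0 < φ' v₂ * (φ' w - φ' v₁) * (A - φ w) + φ' v₂ * φ' w * (φ w - L v₁ w)
        + φ' v₁ * (φ' w * L v₂ w - φ' v₂ * φ w) := by
        have hb := ha.trans hab
        have hc := hb.trans hbc
        exact add_pos (add_pos (mul_pos (mul_pos ha (sub_pos.2 hbc)) (sub_pos.2 hwA))
          (mul_pos (mul_pos ha hc) (sub_pos.2 htangent))) (mul_pos hb (sub_pos.2 hcross))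
    _ = _ := by ring

/-- Positivity of the denominator `D(v₁,v₂,w)` in the implicit differentiation of the
η-continuity equation, for `w > v₁ > v₂ > 0` with `φ(w) < A`. -/
theorem stmt4 (φ φ' φ'' : ℝ → ℝ)
    (hd : ∀ v > 0, HasDerivAt φ (φ' v) v)
    (hd' : ∀ v > 0, HasDerivAt φ' (φ'' v) v)
    (hφ : ∀ v > 0, 0 < φ v) (hφ' : ∀ v > 0, 0 < φ' v) (hφ'' : ∀ v > 0, 0 < φ'' v)
    (A : ℝ) (hA : 0 < A)
    (L : ℝ → ℝ → ℝ) (hL : ∀ V v, L V v = φ V + φ' V * (v - V))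
    (v₁ v₂ w : ℝ) (h2 : 0 < v₂) (h12 : v₂ < v₁) (h1w : v₁ < w) (hwA : φ w < A)
    (hLpos : ∀ u > v₂, 0 < L v₂ u) :
    0 < φ' v₂ * (φ' w * (A - L v₁ w) - φ' v₁ * (A - φ w))
        + φ' v₁ * (φ' w * L v₂ w - φ' v₂ * φ w) :=
  stmt4_general φ φ' φ'' hd hd' hφ' hφ'' A L hL v₁ v₂ w h2 h12 h1w hwA hLpos
end

section
/- Let φ be twice differentiable and strictly convex on (0,∞) with φ′ > 0. For w > v₁ > v₂ > 0 and A > φ(w) ≥ 0, the quantity N₂(v₁,v₂,w) = φ″(v₂)·{ −φ(w)·[A − L_{v₁}(w)] + [A − φ(w)]·φ′(v₁)·(w − v₂) } satisfies N₂(v₁,v₂,w) < −φ″(v₂)·[A − φ(w)]·L_w(v₂) < 0, provided L_w(v₂) > 0, where L_V denotes the tangent line to φ at V. -/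
/-- MVT helper: strict increase of a function with positive derivative on (0,∞). -/
lemma aux_mvt (f f' : ℝ → ℝ) (hd : ∀ v > 0, HasDerivAt f (f' v) v)
    (hpos : ∀ v > 0, 0 < f' v) {a b : ℝ} (ha : 0 < a) (hab : a < b) :
    f a < f b := by
  have hcont : ContinuousOn f (Set.Icc a b) := fun x hx =>
    ((hd x (lt_of_lt_of_le ha hx.1)).continuousAt).continuousWithinAt
  obtain ⟨c, hc, hceq⟩ := exists_hasDerivAt_eq_slope f f' hab hcont
    (fun x hx => hd x (lt_trans ha hx.1))
  have hc0 : 0 < c := lt_trans ha hc.1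
  have := hpos c hc0
  have hba : 0 < b - a := by linarith
  rw [eq_div_iff (ne_of_gt hba)] at hceq
  nlinarith [mul_pos this hba]

/-- Tangent line at a lies strictly below f at b, for strictly convex f. -/
lemma aux_tangent (f f' f'' : ℝ → ℝ) (hd : ∀ v > 0, HasDerivAt f (f' v) v)
    (hd' : ∀ v > 0, HasDerivAt f' (f'' v) v) (hpos : ∀ v > 0, 0 < f'' v)
    {a b : ℝ} (ha : 0 < a) (hab : a < b) :
    f a + f' a * (b - a) < f b := by
  have hcont : ContinuousOn f (Set.Icc a b) := fun x hx =>
    ((hd x (lt_of_lt_of_le ha hx.1)).continuousAt).continuousWithinAt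
  obtain ⟨c, hc, hceq⟩ := exists_hasDerivAt_eq_slope f f' hab hcont
    (fun x hx => hd x (lt_trans ha hx.1))
  have hfc : f' a < f' c := aux_mvt f' f'' hd' hpos ha hc.1
  have hba : 0 < b - a := by linarith
  rw [eq_div_iff (ne_of_gt hba)] at hceq
  nlinarith [mul_lt_mul_of_pos_right hfc hba]

/-- Negativity bound for `N₂(v₁,v₂,w)` with `w > v₁ > v₂ > 0`, `0 ≤ φ(w) < A` and
`L_w(v₂) > 0`. -/
theorem stmt6 (φ φ' φ'' : ℝ → ℝ)
    (hd : ∀ v > 0, HasDerivAt φ (φ' v) v)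
    (hd' : ∀ v > 0, HasDerivAt φ' (φ'' v) v)
    (hφ : ∀ v > 0, 0 < φ v) (hφ' : ∀ v > 0, 0 < φ' v) (hφ'' : ∀ v > 0, 0 < φ'' v)
    (A : ℝ) (hA : 0 < A)
    (L : ℝ → ℝ → ℝ) (hL : ∀ V v, L V v = φ V + φ' V * (v - V))
    (v₁ v₂ w : ℝ) (h2 : 0 < v₂) (h12 : v₂ < v₁) (h1w : v₁ < w)
    (hwA : φ w < A) (hw0 : 0 ≤ φ w) (hLw : 0 < L w v₂) :
    φ'' v₂ * (-(φ w) * (A - L v₁ w) + (A - φ w) * φ' v₁ * (w - v₂))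
      < -(φ'' v₂ * (A - φ w) * L w v₂) ∧
    -(φ'' v₂ * (A - φ w) * L w v₂) < 0 := by
  have h1 : 0 < v₁ := lt_trans h2 h12
  have hp2 : 0 < φ'' v₂ := hφ'' v₂ h2
  have htan : φ v₁ + φ' v₁ * (w - v₁) < φ w :=
    aux_tangent φ φ' φ'' hd hd' hφ'' h1 h1w
  have hmono : φ' v₁ < φ' w := aux_mvt φ' φ'' hd' hφ'' h1 h1w
  have hAw : 0 < A - φ w := by linarith
  constructor
  · rw [hL, hL] at *
    have hkey : -(φ w) * (A - (φ v₁ + φ' v₁ * (w - v₁))) + (A - φ w) * φ' v₁ * (w - v₂)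
        < -((A - φ w) * (φ w + φ' w * (v₂ - w))) := by
      nlinarith [mul_nonneg hw0 (le_of_lt (sub_pos.mpr htan)),
        mul_lt_mul_of_pos_left hmono hAw, mul_pos hAw (show (0:ℝ) < w - v₂ by linarith)]
    calc φ'' v₂ * (-(φ w) * (A - (φ v₁ + φ' v₁ * (w - v₁))) + (A - φ w) * φ' v₁ * (w - v₂))
        < φ'' v₂ * (-((A - φ w) * (φ w + φ' w * (v₂ - w)))) :=
          (mul_lt_mul_iff_right₀ hp2).mpr hkey
      _ = -(φ'' v₂ * (A - φ w) * (φ w + φ' w * (v₂ - w))) := by ring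
  · have := mul_pos (mul_pos hp2 hAw) hLw
    linarith
end

section
/- Suppose W > V₁ > V₂ > 0 solve the η-continuity equation φ′(V₂)·φ(W)·[A − L_{V₁}(W)] = φ′(V₁)·[A − φ(W)]·L_{V₂}(W), where φ is twice differentiable, strictly convex, positive with positive derivative on (0,∞), A > φ(W), and L_V is the tangent to φ at V with L_{V₂}(W) > 0, L_w(V₂) > 0. If W is implicitly a differentiable function of (V₁, V₂) via this equation, then ∂W/∂V₁ > 0 and ∂W/∂V₂ < 0. -/
set_option maxHeartbeats 1000000
open Filter Set

lemma tangent_aux (φ φ' : ℝ → ℝ)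
    (hd : ∀ v > (0:ℝ), HasDerivAt φ (φ' v) v)
    (hmono : StrictMonoOn φ' (Set.Ioi 0))
    {s t : ℝ} (hs : 0 < s) (hst : s < t) :
    φ s + φ' s * (t - s) < φ t ∧ φ t + φ' t * (s - t) < φ s := by
  obtain ⟨ξ, hξ, hsl⟩ := exists_hasDerivAt_eq_slope φ φ' hst
    (fun x hx => (hd x (lt_of_lt_of_le hs hx.1)).continuousAt.continuousWithinAt)
    (fun x hx => hd x (hs.trans hx.1))
  have hξ0 : 0 < ξ := hs.trans hξ.1
  have h1 : φ' s < φ' ξ := hmono hs hξ0 hξ.1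
  have h2 : φ' ξ < φ' t := hmono hξ0 (hs.trans hst) hξ.2
  have hts : 0 < t - s := by linarith
  have hk : φ t - φ s = φ' ξ * (t - s) := by
    field_simp at hsl; linarith [hsl]
  constructor <;> nlinarith

/-- Implicit differentiation of the η-continuity equation
`φ'(V₂)·φ(W)·[A − L_{V₁}(W)] = φ'(V₁)·[A − φ(W)]·L_{V₂}(W)` defining the transition
speed `W = W(V₁,V₂)` with `W > V₁ > V₂ > 0` and `φ(W) < A`: the partial derivatives
satisfy `∂W/∂V₁ > 0` and `∂W/∂V₂ < 0`. -/
theorem stmt16 (φ φ' φ'' : ℝ → ℝ)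
    (hd : ∀ v > (0 : ℝ), HasDerivAt φ (φ' v) v)
    (hd' : ∀ v > (0 : ℝ), HasDerivAt φ' (φ'' v) v)
    (hφ : ∀ v > (0 : ℝ), 0 < φ v) (hφ' : ∀ v > (0 : ℝ), 0 < φ' v)
    (hφ'' : ∀ v > (0 : ℝ), 0 < φ'' v)
    (A : ℝ) (hA : 0 < A)
    (L : ℝ → ℝ → ℝ) (hL : ∀ V v, L V v = φ V + φ' V * (v - V))
    (W : ℝ → ℝ → ℝ) (V₁ V₂ : ℝ)
    (h2 : 0 < V₂) (h12 : V₂ < V₁) (h1W : V₁ < W V₁ V₂)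
    (hWA : φ (W V₁ V₂) < A)
    (hLV₂ : 0 < L V₂ (W V₁ V₂)) (hLw : 0 < L (W V₁ V₂) V₂)
    (hF : ∀ᶠ p : ℝ × ℝ in nhds (V₁, V₂),
      φ' p.2 * φ (W p.1 p.2) * (A - L p.1 (W p.1 p.2))
        = φ' p.1 * (A - φ (W p.1 p.2)) * L p.2 (W p.1 p.2))
    (dFdW : ℝ)
    (hdFdW : HasDerivAt
      (fun u => φ' V₂ * φ u * (A - L V₁ u) - φ' V₁ * (A - φ u) * L V₂ u)
      dFdW (W V₁ V₂))
    (hne : dFdW ≠ 0)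
    (d₁ d₂ : ℝ)
    (hW1 : HasDerivAt (fun x => W x V₂) d₁ V₁)
    (hW2 : HasDerivAt (fun y => W V₁ y) d₂ V₂) :
    0 < d₁ ∧ d₂ < 0 := by
  have h01 : 0 < V₁ := h2.trans h12
  set w := W V₁ V₂ with hw_def
  have hw : 0 < w := h01.trans h1W
  have h2w : V₂ < w := h12.trans h1W
  -- strict monotonicity of φ'
  have hmono : StrictMonoOn φ' (Set.Ioi 0) := by
    apply strictMonoOn_of_deriv_pos (convex_Ioi 0)
    · exact fun x hx => (hd' x hx).continuousAt.continuousWithinAt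
    · intro x hx
      rw [interior_Ioi] at hx
      rw [(hd' x hx).deriv]
      exact hφ'' x hx
  obtain ⟨T1, -⟩ := tangent_aux φ φ' hd hmono h01 h1W
  obtain ⟨-, T2⟩ := tangent_aux φ φ' hd hmono h2 h2w
  have hb'c' : φ' V₂ < φ' w := hmono h2 hw h2w
  -- F = 0 at the point
  have hF0 := hF.self_of_nhds
  simp only [hL] at hF0
  rw [← hw_def] at hF0
  -- basic positivity
  have ha' := hφ' V₁ h01
  have hb' := hφ' V₂ h2
  have hc' := hφ' w hw
  have ha'' := hφ'' V₁ h01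
  have hb'' := hφ'' V₂ h2
  have hb := hφ V₂ h2
  have hc := hφ w hw
  rw [hL] at hLV₂
  have hAc : 0 < A - φ w := by linarith
  -- F_W > 0
  have key1 : 0 < φ' w * (φ V₂ + φ' V₂ * (w - V₂)) - φ' V₂ * φ w := by
    nlinarith [mul_pos hb' (show (0:ℝ) < φ V₂ - φ w - φ' w * (V₂ - w) by linarith),
      mul_pos hb (sub_pos.mpr hb'c')]
  set FW : ℝ := φ' w * (φ' V₂ * (A - (φ V₁ + φ' V₁ * (w - V₁))) + φ' V₁ * (φ V₂ + φ' V₂ * (w - V₂))) - φ' V₁ * φ' V₂ * A with hFW_def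
  have key2 : φ w * FW = φ' V₁ * A * (φ' w * (φ V₂ + φ' V₂ * (w - V₂)) - φ' V₂ * φ w) := by
    rw [hFW_def]; linear_combination φ' w * hF0
  have hFW : 0 < FW := by
    have h := key2 ▸ mul_pos (mul_pos ha' hA) key1
    nlinarith [h, hc]
  -- slice along x ↦ (x, V₂)
  have ht1 : Tendsto (fun x : ℝ => (x, V₂)) (nhds V₁) (nhds (V₁, V₂)) := by
    exact (continuous_id.prodMk continuous_const).tendsto V₁
  have hs1 := ht1.eventually hF
  have hcomp1 : HasDerivAt (fun x => φ (W x V₂)) (φ' w * d₁) V₁ := (hd w hw).comp V₁ hW1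
  have Hg1 := ((hcomp1.const_mul (φ' V₂)).mul
      ((hasDerivAt_const V₁ A).sub ((hd V₁ h01).add
        ((hd' V₁ h01).mul (hW1.sub (hasDerivAt_id V₁)))))).sub
    (((hd' V₁ h01).mul ((hasDerivAt_const V₁ A).sub hcomp1)).mul
      ((hasDerivAt_const V₁ (φ V₂)).add ((hW1.sub_const V₂).const_mul (φ' V₂))))
  have Hz1 := Hg1.congr_of_eventuallyEq (f₁ := fun _ => (0:ℝ)) (by
    filter_upwards [hs1] with x hx
    simp only [hL] at hx
    simp only [Function.comp_apply, Pi.mul_apply, Pi.sub_apply, Pi.add_apply, id_eq]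
    linarith)
  have hE1 := Hz1.unique (hasDerivAt_const V₁ 0)
  simp only [Pi.mul_apply, Pi.sub_apply, Pi.add_apply, id_eq, ← hw_def] at hE1
  have hkey1 : FW * d₁ = φ'' V₁ * (φ' V₂ * φ w * (w - V₁) + (A - φ w) * (φ V₂ + φ' V₂ * (w - V₂))) := by
    rw [hFW_def]; linear_combination hE1
  have hd1 : 0 < d₁ := by
    have hpos : 0 < FW * d₁ := by
      rw [hkey1]
      have := mul_pos (mul_pos hb' hc) (show (0:ℝ) < w - V₁ by linarith)
      nlinarith [mul_pos hAc hLV₂]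
    nlinarith [hpos, hFW]
  -- slice along y ↦ (V₁, y)
  have ht2 : Tendsto (fun y : ℝ => (V₁, y)) (nhds V₂) (nhds (V₁, V₂)) := by
    exact (continuous_const.prodMk continuous_id).tendsto V₂
  have hs2 := ht2.eventually hF
  have hcomp2 : HasDerivAt (fun y => φ (W V₁ y)) (φ' w * d₂) V₂ := (hd w hw).comp V₂ hW2
  have Hg2 := (((hd' V₂ h2).mul hcomp2).mul
      ((hasDerivAt_const V₂ A).sub ((hasDerivAt_const V₂ (φ V₁)).add
        ((hW2.sub_const V₁).const_mul (φ' V₁))))).sub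
    ((((hasDerivAt_const V₂ A).sub hcomp2).const_mul (φ' V₁)).mul
      ((hd V₂ h2).add ((hd' V₂ h2).mul (hW2.sub (hasDerivAt_id V₂)))))
  have Hz2 := Hg2.congr_of_eventuallyEq (f₁ := fun _ => (0:ℝ)) (by
    filter_upwards [hs2] with y hy
    simp only [hL] at hy
    simp only [Function.comp_apply, Pi.mul_apply, Pi.sub_apply, Pi.add_apply, id_eq]
    linarith)
  have hE2 := Hz2.unique (hasDerivAt_const V₂ 0)
  simp only [Pi.mul_apply, Pi.sub_apply, Pi.add_apply, id_eq, ← hw_def] at hE2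
  have hkey2 : FW * d₂ = -(φ'' V₂ * (φ w * (A - (φ V₁ + φ' V₁ * (w - V₁))) - φ' V₁ * (A - φ w) * (w - V₂))) := by
    rw [hFW_def]; linear_combination hE2
  have hP2 : 0 < φ' V₂ * (φ w * (A - (φ V₁ + φ' V₁ * (w - V₁))) - φ' V₁ * (A - φ w) * (w - V₂)) := by
    have : φ' V₂ * (φ w * (A - (φ V₁ + φ' V₁ * (w - V₁))) - φ' V₁ * (A - φ w) * (w - V₂))
        = φ' V₁ * (A - φ w) * φ V₂ := by linear_combination hF0
    rw [this]
    exact mul_pos (mul_pos ha' hAc) hb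
  have hd2 : d₂ < 0 := by
    have hneg : FW * d₂ < 0 := by
      rw [hkey2]
      nlinarith [hP2, hb'', hb']
    nlinarith [hneg, hFW]
  exact ⟨hd1, hd2⟩
end
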